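/- (Sufficient decrease for fully-corrective Frank-Wolfe.) Suppose J : M⁺(X,b) → ℝ is L-smooth with influence function h_μ, R = sup{‖μ₁−μ₂‖ : μ₁,μ₂ ∈ M⁺(X,b)}, and at iteration k the point x*(μ_k) satisfies h_{μ_k}(x*(μ_k)) ≤ 0. If μ_{k+1} minimizes J over the convex hull of the atoms {b·δ_{x*(μ_0)}, …, b·δ_{x*(μ_k)}} (together with μ_k), then J(μ_{k+1}) − J(μ_k) ≤ −min{ (b/(2LR²))·h_{μ_k}(x*(μ_k))², LR²/(2b) } ≤ 0. -/

import Mathlib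

/-!
Moving from `μ_k` a fraction `t` of the way towards the atom `b δ_{x_k}` changes the measure of
every set by `t` times its change under the full move, so the total variation distance covered is
at most `t R`. Smoothness and linearity of the derivative along the segment then give
`J(ν_t) - J(μ_k) ≤ t h + (L R² / b) t² / 2` with `h = h_{μ_k}(x_k) ≤ 0`. Minimising this quadratic
over `t ∈ [0, 1]` (at `t = min (-b h / (L R²)) 1`) gives the bound, and the fully-corrective iterate
does at least as well as every point `ν_t` of the segment.
-/

open MeasureTheory Set
open scoped ENNReal

noncomputable section

abbrev R2 := EuclideanSpace ℝ (Fin 2)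

theorem exists_mem_Icc_mul_add_sq_le {q a : ℝ} (hq : 0 < q) (ha : a ≤ 0) :
    ∃ t ∈ Icc (0 : ℝ) 1, t * a + q / 2 * t ^ 2 ≤ -min (a ^ 2 / (2 * q)) (q / 2) := by
  rcases le_or_gt (-a) q with hle | hlt
  · refine ⟨-a / q, ⟨div_nonneg (by linarith) hq.le, (div_le_one hq).2 hle⟩, ?_⟩
    have hval : -a / q * a + q / 2 * (-a / q) ^ 2 = -(a ^ 2 / (2 * q)) := by
      field_simp; ring
    rw [hval, neg_le_neg_iff]
    exact min_le_left _ _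
  · refine ⟨1, ⟨zero_le_one, le_rfl⟩, ?_⟩
    linarith [min_le_right (a ^ 2 / (2 * q)) (q / 2)]

namespace MeasureTheory

variable {α : Type*} [MeasurableSpace α]

def massMeasures (X : Set α) (b : ℝ) : Set (Measure α) :=
  {μ | μ Xᶜ = 0 ∧ μ univ = ENNReal.ofReal b}

theorem isFiniteMeasure_of_mem_massMeasures {X : Set α} {b : ℝ} {μ : Measure α}
    (hμ : μ ∈ massMeasures X b) : IsFiniteMeasure μ :=
  ⟨hμ.2 ▸ ENNReal.ofReal_lt_top⟩

theorem smul_dirac_mem_massMeasures [MeasurableSingletonClass α] {X : Set α} {x : α}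
    (hx : x ∈ X) (b : ℝ) : ENNReal.ofReal b • Measure.dirac x ∈ massMeasures X b := by
  simp [massMeasures, Measure.dirac_apply, hx]

theorem lineMap_mem_massMeasures {X : Set α} {b t : ℝ} {μ ν : Measure α}
    (hμ : μ ∈ massMeasures X b) (hν : ν ∈ massMeasures X b) (ht : t ∈ Icc (0 : ℝ) 1) :
    ENNReal.ofReal (1 - t) • μ + ENNReal.ofReal t • ν ∈ massMeasures X b := by
  refine ⟨by simp [hμ.1, hν.1], ?_⟩
  simp only [Measure.add_apply, Measure.smul_apply, smul_eq_mul, hμ.2, hν.2, ← add_mul]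
  rw [← ENNReal.ofReal_add (by linarith [ht.2]) ht.1, sub_add_cancel, ENNReal.ofReal_one, one_mul]

def tvDist (μ ν : Measure α) : ℝ :=
  sSup {r | ∃ A : Set α, MeasurableSet A ∧ r = |(μ A).toReal - (ν A).toReal|}

theorem tvDist_nonneg (μ ν : Measure α) : 0 ≤ tvDist μ ν :=
  Real.sSup_nonneg fun _ ⟨_, _, hr⟩ ↦ hr ▸ abs_nonneg _

theorem abs_sub_le_tvDist (μ ν : Measure α) [IsFiniteMeasure μ] [IsFiniteMeasure ν]
    {A : Set α} (hA : MeasurableSet A) : |μ.real A - ν.real A| ≤ tvDist μ ν := by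
  refine le_csSup ⟨μ.real univ + ν.real univ, ?_⟩ ⟨A, hA, rfl⟩
  rintro _ ⟨B, -, rfl⟩
  change |μ.real B - ν.real B| ≤ _
  have hμB : μ.real B ≤ μ.real univ := measureReal_mono (subset_univ B)
  have hνB : ν.real B ≤ ν.real univ := measureReal_mono (subset_univ B)
  rw [abs_sub_le_iff]
  constructor <;> linarith [measureReal_nonneg (μ := μ) (s := B),
    measureReal_nonneg (μ := ν) (s := B)]

theorem ofReal_smul_apply_ne_top (μ : Measure α) [IsFiniteMeasure μ] (c : ℝ) (A : Set α) :
    (ENNReal.ofReal c • μ) A ≠ ∞ :=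
  ENNReal.mul_ne_top ENNReal.ofReal_ne_top (measure_ne_top μ A)

theorem tvDist_lineMap_le (μ ν : Measure α) [IsFiniteMeasure μ] [IsFiniteMeasure ν]
    {t : ℝ} (ht : t ∈ Icc (0 : ℝ) 1) :
    tvDist μ (ENNReal.ofReal (1 - t) • μ + ENNReal.ofReal t • ν) ≤ t * tvDist μ ν := by
  refine Real.sSup_le ?_ (mul_nonneg ht.1 (tvDist_nonneg μ ν))
  rintro _ ⟨A, hA, rfl⟩
  have hsub : μ.real A - (ENNReal.ofReal (1 - t) • μ + ENNReal.ofReal t • ν).real A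
      = t * (μ.real A - ν.real A) := by
    rw [measureReal_add_apply (ofReal_smul_apply_ne_top μ _ A) (ofReal_smul_apply_ne_top ν _ A),
      measureReal_ennreal_smul_apply, measureReal_ennreal_smul_apply,
      ENNReal.toReal_ofReal (by linarith [ht.2]), ENNReal.toReal_ofReal ht.1]
    ring
  change |μ.real A - (ENNReal.ofReal (1 - t) • μ + ENNReal.ofReal t • ν).real A| ≤ _
  rw [hsub, abs_mul, abs_of_nonneg ht.1]
  exact mul_le_mul_of_nonneg_left (abs_sub_le_tvDist μ ν hA) ht.1

end MeasureTheory

theorem fcFW_sufficient_decrease_general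
    (X : Set R2)
    (b L R : ℝ) (hb : 0 < b) (hL : 0 < L) (hR : 0 < R)
    (M : Set (Measure R2))
    (hM : M = {μ : Measure R2 | μ Xᶜ = 0 ∧ μ Set.univ = ENNReal.ofReal b})
    (J : Measure R2 → ℝ) (h : Measure R2 → R2 → ℝ)
    (D : Measure R2 → Measure R2 → ℝ)
    (tv : Measure R2 → Measure R2 → ℝ)
    (htv : ∀ μ ν : Measure R2, tv μ ν =
      sSup {r : ℝ | ∃ A : Set R2, MeasurableSet A ∧ r = |(μ A).toReal - (ν A).toReal|})
    (hRbd : ∀ μ ∈ M, ∀ ν ∈ M, tv μ ν ≤ R)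
    (hsmooth : ∀ μ ∈ M, ∀ ν ∈ M,
      0 ≤ J ν - J μ - D μ ν ∧ J ν - J μ - D μ ν ≤ L / (2 * b) * (tv μ ν)^2)
    (hlin : ∀ μ ∈ M, ∀ x ∈ X, ∀ t ∈ Set.Icc (0:ℝ) 1,
      D μ (ENNReal.ofReal (1 - t) • μ
            + ENNReal.ofReal t • (ENNReal.ofReal b • Measure.dirac x)) = t * h μ x)
    (μk μnext : Measure R2) (hμk : μk ∈ M)
    (xk : R2) (hxk : xk ∈ X)
    (hneg : h μk xk ≤ 0)
    (C : Set (Measure R2))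
    (hseg : ∀ t ∈ Set.Icc (0:ℝ) 1,
      (ENNReal.ofReal (1 - t) • μk
        + ENNReal.ofReal t • (ENNReal.ofReal b • Measure.dirac xk)) ∈ C)
    (hmin : ∀ ν ∈ C, J μnext ≤ J ν) :
    J μnext - J μk ≤ - min (b / (2 * L * R^2) * (h μk xk)^2) (L * R^2 / (2 * b)) := by
  obtain rfl : tv = tvDist := funext fun μ ↦ funext (htv μ)
  change M = massMeasures X b at hM
  subst hM
  obtain ⟨t, ht, hquad⟩ := exists_mem_Icc_mul_add_sq_le (q := L * R ^ 2 / b) (by positivity) hneg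
  set δ := ENNReal.ofReal b • Measure.dirac xk
  set ν := ENNReal.ofReal (1 - t) • μk + ENNReal.ofReal t • δ
  have hδ : δ ∈ massMeasures X b := smul_dirac_mem_massMeasures hxk b
  have := isFiniteMeasure_of_mem_massMeasures hμk
  have := isFiniteMeasure_of_mem_massMeasures hδ
  have hdist : tvDist μk ν ≤ t * R :=
    (tvDist_lineMap_le μk δ ht).trans (mul_le_mul_of_nonneg_left (hRbd μk hμk δ hδ) ht.1)
  have hstep : J ν - J μk ≤ t * h μk xk + L / (2 * b) * (t * R) ^ 2 := by
    have hupper := (hsmooth μk hμk ν (lineMap_mem_massMeasures hμk hδ ht)).2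
    rw [hlin μk hμk xk hxk t ht] at hupper
    have : tvDist μk ν ^ 2 ≤ (t * R) ^ 2 := pow_le_pow_left₀ (tvDist_nonneg μk ν) hdist 2
    linarith [mul_le_mul_of_nonneg_left this (by positivity : 0 ≤ L / (2 * b))]
  calc J μnext - J μk ≤ J ν - J μk := by linarith [hmin ν (hseg t ht)]
    _ ≤ t * h μk xk + L / (2 * b) * (t * R) ^ 2 := hstep
    _ = t * h μk xk + L * R ^ 2 / b / 2 * t ^ 2 := by ring
    _ ≤ -min (h μk xk ^ 2 / (2 * (L * R ^ 2 / b))) (L * R ^ 2 / b / 2) := hquad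
    _ = _ := by congr 2 <;> field_simp

/-- sufficient decrease for fully-corrective Frank-Wolfe. If `J` is
`L`-smooth on `M⁺(X,b)` (with linear von Mises derivative `D`, influence function `h`,
and total variation diameter bound `R`), `h_{μ_k}(x*(μ_k)) ≤ 0`, and `μ_{k+1}` minimizes
`J` over a set `C` containing the segment from `μ_k` to `b·δ_{x*(μ_k)}` (the convex hull
of the accumulated atoms together with `μ_k`), then
`J(μ_{k+1}) − J(μ_k) ≤ −min{(b/(2LR²))·h_{μ_k}(x*(μ_k))², LR²/(2b)}`. -/
theorem fcFW_sufficient_decrease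
    (X : Set R2) (hXc : IsCompact X) (hXconv : Convex ℝ X)
    (b L R : ℝ) (hb : 0 < b) (hL : 0 < L) (hR : 0 < R)
    (M : Set (Measure R2))
    (hM : M = {μ : Measure R2 | μ Xᶜ = 0 ∧ μ Set.univ = ENNReal.ofReal b})
    (J : Measure R2 → ℝ) (h : Measure R2 → R2 → ℝ)
    (D : Measure R2 → Measure R2 → ℝ)
    (tv : Measure R2 → Measure R2 → ℝ)
    (htv : ∀ μ ν : Measure R2, tv μ ν =
      sSup {r : ℝ | ∃ A : Set R2, MeasurableSet A ∧ r = |(μ A).toReal - (ν A).toReal|})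
    (hRbd : ∀ μ ∈ M, ∀ ν ∈ M, tv μ ν ≤ R)
    (hsmooth : ∀ μ ∈ M, ∀ ν ∈ M,
      0 ≤ J ν - J μ - D μ ν ∧ J ν - J μ - D μ ν ≤ L / (2 * b) * (tv μ ν)^2)
    (hlin : ∀ μ ∈ M, ∀ x ∈ X, ∀ t ∈ Set.Icc (0:ℝ) 1,
      D μ (ENNReal.ofReal (1 - t) • μ
            + ENNReal.ofReal t • (ENNReal.ofReal b • Measure.dirac x)) = t * h μ x)
    (μk μnext : Measure R2) (hμk : μk ∈ M)
    (xk : R2) (hxk : xk ∈ X)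
    (hneg : h μk xk ≤ 0)
    (C : Set (Measure R2))
    (hseg : ∀ t ∈ Set.Icc (0:ℝ) 1,
      (ENNReal.ofReal (1 - t) • μk
        + ENNReal.ofReal t • (ENNReal.ofReal b • Measure.dirac xk)) ∈ C)
    (hmem : μnext ∈ C) (hmin : ∀ ν ∈ C, J μnext ≤ J ν) :
    J μnext - J μk ≤ - min (b / (2 * L * R^2) * (h μk xk)^2) (L * R^2 / (2 * b)) :=
  fcFW_sufficient_decrease_general X b L R hb hL hR M hM J h D tv htv hRbd hsmooth hlin μk μnext hμk
    xk hxk hneg C hseg hmin
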